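/- Let K ≥ 1 and SF_p ≥ 1 be integers and let d[0],…,d[SF_p−1] ∈ {−1,+1} be a spreading sequence. Then the correlation coefficient satisfies the closed form ρ_DM(d) = (1 / (K · SF_p · sin(π/(2K)))) · | Σ_{l=0}^{SF_p−1} (−1)^l · exp( i·π·((K−1)/(2K))·d[l] ) |. -/

import Mathlib

/-!
Conjugating the filter for `-d` gives back the filter for `d`, so the correlation is the sum of
the squared chips. The phase accumulated before chip `l` squares to `e^{iπ Σ_{i<l} d i} = (-1)^l`,
and the sum over the `K` samples of chip `l` is geometric with ratio `e^{iπ d l / K}`; the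
Dirichlet-kernel identity evaluates it to `e^{iπ d l (K-1)/(2K)} / sin(π/(2K))` because `d l = ±1`.
-/

open Real Complex Finset

/-- The `l`-th chip (sample index `n = 0,…,K-1`) of the DSSS-MSK matched filter for the
symbol spread by the binary sequence `d`:
`s^{(l)}[n] = exp(i (π/2) Σ_{i<l} d i) · exp(i π d l n / (2K))`.
The filter for symbol '1' uses `d`, the one for symbol '0' uses `-d`. -/
noncomputable def dsssMskChip (d : ℕ → ℝ) (K l n : ℕ) : ℂ :=
  Complex.exp (Complex.I * (Real.pi / 2) * (∑ i ∈ Finset.range l, (d i : ℂ))) *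
    Complex.exp (Complex.I * Real.pi * (d l : ℂ) * (n : ℂ) / (2 * (K : ℂ)))

open ComplexConjugate

/-- The Dirichlet-kernel identity `∑_{n<K} e^{2inθ} = e^{i(K-1)θ} sin(Kθ) / sin θ`, multiplied out
so that it holds for every `θ`. -/
theorem sum_range_exp_two_mul_I_mul_sin (θ : ℂ) (K : ℕ) :
    (∑ n ∈ range K, exp (2 * n * θ * I)) * Complex.sin θ =
      exp ((K - 1) * θ * I) * Complex.sin (K * θ) := by
  induction K with
  | zero => simp
  | succ K ih =>
    have hprev : exp ((K - 1) * θ * I) = exp (K * θ * I) * exp (-θ * I) := by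
      rw [← Complex.exp_add]; ring_nf
    have hlast : exp (2 * K * θ * I) = exp (K * θ * I) * exp (K * θ * I) := by
      rw [← Complex.exp_add]; ring_nf
    push_cast
    rw [sum_range_succ, add_mul, ih, hprev, hlast, add_sub_cancel_right, add_mul, one_mul,
      Complex.sin_add, Complex.exp_mul_I (-θ), Complex.exp_mul_I (K * θ), Complex.cos_neg,
      Complex.sin_neg]
    ring

theorem exp_I_mul_pi_mul_of_sign {e : ℝ} (he : e = 1 ∨ e = -1) :
    exp (I * π * e) = -1 := by
  rcases he with rfl | rfl
  · simpa [mul_comm] using exp_pi_mul_I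
  · simpa [mul_comm] using exp_neg_pi_mul_I

theorem exp_I_mul_pi_mul_sum_of_sign {d : ℕ → ℝ} {l : ℕ} (hd : ∀ i < l, d i = 1 ∨ d i = -1) :
    exp (I * π * ∑ i ∈ range l, (d i : ℂ)) = (-1) ^ l := by
  rw [mul_sum, Complex.exp_sum,
    prod_congr rfl fun i hi => exp_I_mul_pi_mul_of_sign (hd i (mem_range.1 hi)), prod_const,
    card_range]

theorem sin_pi_div_two_mul_pos {K : ℕ} (hK : 1 ≤ K) : 0 < Real.sin (π / (2 * K)) := by
  have hK' : (1 : ℝ) ≤ K := by exact_mod_cast hK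
  exact Real.sin_pos_of_pos_of_lt_pi (by positivity) (div_lt_self pi_pos (by linarith))

theorem sum_range_exp_of_sign {K : ℕ} (hK : 1 ≤ K) {e : ℝ} (he : e = 1 ∨ e = -1) :
    ∑ n ∈ range K, exp (2 * n * (π * e / (2 * K)) * I) =
      exp (I * π * ((K - 1) / (2 * K)) * e) / (Real.sin (π / (2 * K)) : ℂ) := by
  have hK0 : (K : ℂ) ≠ 0 := Nat.cast_ne_zero.2 (by omega)
  have hs : (Real.sin (π / (2 * K)) : ℂ) ≠ 0 := ofReal_ne_zero.2 (sin_pi_div_two_mul_pos hK).ne'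
  have he0 : (e : ℂ) ≠ 0 := by rcases he with rfl | rfl <;> norm_num
  have hsinθ : Complex.sin (π * e / (2 * K)) = e * (Real.sin (π / (2 * K)) : ℂ) := by
    push_cast; rcases he with rfl | rfl <;> simp [neg_div, Complex.sin_neg]
  have hsinKθ : Complex.sin (K * (π * e / (2 * K))) = e := by
    rw [show (K : ℂ) * (π * e / (2 * K)) = π / 2 * e by field_simp]
    rcases he with rfl | rfl <;> simp [Complex.sin_neg]
  have key := sum_range_exp_two_mul_I_mul_sin (π * e / (2 * K)) K
  rw [hsinθ, hsinKθ] at key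
  rw [eq_div_iff hs, show I * π * ((K - 1) / (2 * K)) * e = (K - 1) * (π * e / (2 * K)) * I by ring]
  exact mul_right_cancel₀ he0 (by linear_combination key)

theorem conj_dsssMskChip_neg (d : ℕ → ℝ) (K l n : ℕ) :
    conj (dsssMskChip (fun i => -d i) K l n) = dsssMskChip d K l n := by
  simp only [dsssMskChip, map_mul, ← exp_conj, map_div₀, map_sum, conj_I, conj_ofReal,
    map_ofNat, map_natCast, ofReal_neg, map_neg, sum_neg_distrib]
  ring_nf

theorem dsssMskChip_sq (d : ℕ → ℝ) (K l n : ℕ) :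
    dsssMskChip d K l n ^ 2 =
      exp (I * π * ∑ i ∈ range l, (d i : ℂ)) * exp (2 * n * (π * d l / (2 * K)) * I) := by
  rw [dsssMskChip, mul_pow, ← Complex.exp_nat_mul, ← Complex.exp_nat_mul]
  congr 2 <;> push_cast <;> ring

theorem dsssMsk_correlation_closed_form_general (K SFp : ℕ) (hK : 1 ≤ K)
    (d : ℕ → ℝ) (hd : ∀ l < SFp, d l = 1 ∨ d l = -1) :
    (1 / ((K : ℝ) * (SFp : ℝ))) *
      ‖∑ l ∈ Finset.range SFp, ∑ n ∈ Finset.range K,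
        dsssMskChip d K l n * (starRingEnd ℂ) (dsssMskChip (fun i => -d i) K l n)‖ =
    (1 / ((K : ℝ) * (SFp : ℝ) * Real.sin (Real.pi / (2 * K)))) *
      ‖∑ l ∈ Finset.range SFp, (-1 : ℂ) ^ l *
        Complex.exp (Complex.I * Real.pi * ((((K : ℂ) - 1) / (2 * (K : ℂ)))) * (d l : ℂ))‖ := by
  have hchip : ∀ l ∈ range SFp,
      ∑ n ∈ range K, dsssMskChip d K l n * conj (dsssMskChip (fun i => -d i) K l n) =
        (Real.sin (π / (2 * K)) : ℂ)⁻¹ *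
          ((-1) ^ l * exp (I * π * ((K - 1) / (2 * K)) * d l)) := by
    intro l hl
    rw [mem_range] at hl
    simp only [conj_dsssMskChip_neg, ← sq, dsssMskChip_sq, ← mul_sum,
      sum_range_exp_of_sign hK (hd l hl),
      exp_I_mul_pi_mul_sum_of_sign fun i hi => hd i (hi.trans hl)]
    ring
  rw [sum_congr rfl hchip, ← mul_sum, norm_mul, norm_inv, norm_real,
    Real.norm_of_nonneg (sin_pi_div_two_mul_pos hK).le]
  ring

/-- Closed form for the DSSS-MSK correlation coefficient: for a spreading sequence `d`
with entries in `{-1,+1}`,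
`ρ_DM(d) = 1/(K·SF_p·sin(π/(2K))) · |Σ_{l<SF_p} (-1)^l exp(i π ((K-1)/(2K)) d l)|`. -/
theorem dsssMsk_correlation_closed_form (K SFp : ℕ) (hK : 1 ≤ K) (hSFp : 1 ≤ SFp)
    (d : ℕ → ℝ) (hd : ∀ l < SFp, d l = 1 ∨ d l = -1) :
    (1 / ((K : ℝ) * (SFp : ℝ))) *
      ‖∑ l ∈ Finset.range SFp, ∑ n ∈ Finset.range K,
        dsssMskChip d K l n * (starRingEnd ℂ) (dsssMskChip (fun i => -d i) K l n)‖ =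
    (1 / ((K : ℝ) * (SFp : ℝ) * Real.sin (Real.pi / (2 * K)))) *
      ‖∑ l ∈ Finset.range SFp, (-1 : ℂ) ^ l *
        Complex.exp (Complex.I * Real.pi * ((((K : ℂ) - 1) / (2 * (K : ℂ)))) * (d l : ℂ))‖ :=
  dsssMsk_correlation_closed_form_general K SFp hK d hd
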